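/- (Refined gradient descent inequality) Let f : ℝ^n → ℝ be convex with L-Lipschitz gradient, and 0 < t ≤ 1/L. For any x set x⁺ := x − t∇f(x). Then f(x) ≥ f(x⁺) + (t/2)‖∇f(x)‖² + (t/2)‖∇f(x⁺)‖². -/

import Mathlib

/-!
Co-coercivity `f y ≥ f x + ⟪∇f x, y - x⟫ + ‖∇f y - ∇f x‖² / (2L)` is the descent lemma applied to
the convex function `f - ⟪∇f x, ·⟫`, whose minimum is at `x`, along one gradient step of length
`1/L` from `y`. Applied with `x := x⁺`, `y := x`, where `x - x⁺ = t ∇f x`, the inner product and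
`(t/2)‖∇f x - ∇f x⁺‖² ≤ ‖∇f x - ∇f x⁺‖² / (2L)` recombine into `(t/2)(‖∇f x‖² + ‖∇f x⁺‖²)`.
-/

open scoped RealInnerProductSpace
open Set AffineMap

section LipschitzGradient

variable {E : Type*} [NormedAddCommGroup E] [InnerProductSpace ℝ E] [CompleteSpace E]
  {f : E → ℝ} {f' : E → E} {L : ℝ}

lemma HasGradientAt.hasDerivAt_comp_lineMap {g x y : E} {s : ℝ}
    (hf : HasGradientAt f g (lineMap x y s)) :
    HasDerivAt (fun s => f (lineMap x y s)) ⟪g, y - x⟫ s := by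
  have := hf.hasFDerivAt.comp_hasDerivAt s hasDerivAt_lineMap
  rw [InnerProductSpace.toDual_apply_apply] at this
  exact this

lemma ConvexOn.add_inner_le_of_hasGradientAt {g x : E} (hconv : ConvexOn ℝ univ f)
    (hf : HasGradientAt f g x) (y : E) :
    f x + ⟪g, y - x⟫ ≤ f y := by
  have hline : ConvexOn ℝ univ (f ∘ lineMap (k := ℝ) x y) := hconv.comp_affineMap _
  have hderiv : HasDerivAt (f ∘ lineMap (k := ℝ) x y) ⟪g, y - x⟫ 0 :=
    HasGradientAt.hasDerivAt_comp_lineMap (by simpa only [lineMap_apply_zero] using hf)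
  have hslope := hline.le_slope_of_hasDerivAt trivial trivial zero_lt_one hderiv
  simp only [slope_def_field, Function.comp_apply, lineMap_apply_one, lineMap_apply_zero, sub_zero,
    div_one] at hslope
  linarith

lemma le_add_inner_add_sq_of_lipschitz_gradient (hf : ∀ z, HasGradientAt f (f' z) z)
    (hlip : ∀ u v, ‖f' u - f' v‖ ≤ L * ‖u - v‖) (x y : E) :
    f y ≤ f x + ⟪f' x, y - x⟫ + L / 2 * ‖y - x‖ ^ 2 := by
  -- No integration: the gap to the quadratic model along the segment is antitone.
  set h : ℝ → ℝ := fun s =>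
    f (lineMap x y s) - s * ⟪f' x, y - x⟫ - L / 2 * s ^ 2 * ‖y - x‖ ^ 2
  have hderiv : ∀ s, HasDerivAt h
      (⟪f' (lineMap x y s), y - x⟫ - ⟪f' x, y - x⟫ - L * s * ‖y - x‖ ^ 2) s := by
    intro s
    have := (((hf (lineMap x y s)).hasDerivAt_comp_lineMap).sub
      ((hasDerivAt_id s).mul_const ⟪f' x, y - x⟫)).sub
        (((hasDerivAt_pow 2 s).const_mul (L / 2)).mul_const (‖y - x‖ ^ 2))
    exact this.congr_deriv (by simp only [Nat.cast_ofNat, Nat.add_one_sub_one, pow_one]; ring)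
  have hanti : AntitoneOn h (Ici 0) := by
    refine antitoneOn_of_hasDerivWithinAt_nonpos (convex_Ici 0)
      (fun s _ => (hderiv s).continuousAt.continuousWithinAt)
      (fun s _ => (hderiv s).hasDerivWithinAt) fun s hs => ?_
    rw [interior_Ici] at hs
    rw [sub_nonpos]
    have hdist : ‖lineMap x y s - x‖ = s * ‖y - x‖ := by
      rw [← vsub_eq_sub, lineMap_vsub_left, norm_smul, Real.norm_of_nonneg hs.le, vsub_eq_sub]
    calc ⟪f' (lineMap x y s), y - x⟫ - ⟪f' x, y - x⟫
        = ⟪f' (lineMap x y s) - f' x, y - x⟫ := (inner_sub_left _ _ _).symm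
      _ ≤ ‖f' (lineMap x y s) - f' x‖ * ‖y - x‖ := real_inner_le_norm _ _
      _ ≤ L * (s * ‖y - x‖) * ‖y - x‖ := by
          gcongr; rw [← hdist]; exact hlip _ _
      _ = L * s * ‖y - x‖ ^ 2 := by ring
  have hend : h 1 ≤ h 0 := hanti self_mem_Ici (zero_le_one' ℝ) zero_le_one
  simp only [h, lineMap_apply_one, lineMap_apply_zero] at hend
  linarith

lemma apply_sub_inv_smul_le_of_lipschitz_gradient (hL : 0 < L)
    (hf : ∀ z, HasGradientAt f (f' z) z) (hlip : ∀ u v, ‖f' u - f' v‖ ≤ L * ‖u - v‖) (y : E) :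
    f (y - L⁻¹ • f' y) ≤ f y - (2 * L)⁻¹ * ‖f' y‖ ^ 2 := by
  have := le_add_inner_add_sq_of_lipschitz_gradient hf hlip y (y - L⁻¹ • f' y)
  rw [sub_sub_cancel_left, inner_neg_right, real_inner_smul_right, real_inner_self_eq_norm_sq,
    norm_neg, norm_smul, Real.norm_of_nonneg (inv_nonneg.mpr hL.le)] at this
  convert this using 1
  field_simp
  ring

lemma ConvexOn.add_inner_add_sq_le_of_lipschitz_gradient (hconv : ConvexOn ℝ univ f)
    (hL : 0 < L) (hf : ∀ z, HasGradientAt f (f' z) z)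
    (hlip : ∀ u v, ‖f' u - f' v‖ ≤ L * ‖u - v‖) (x y : E) :
    f x + ⟪f' x, y - x⟫ + (2 * L)⁻¹ * ‖f' y - f' x‖ ^ 2 ≤ f y := by
  set φ : E → ℝ := fun z => f z - ⟪f' x, z⟫
  have hφ : ∀ z, HasGradientAt φ (f' z - f' x) z := by
    intro z
    rw [hasGradientAt_iff_hasFDerivAt, map_sub]
    exact (hf z).hasFDerivAt.sub (InnerProductSpace.toDual ℝ E (f' x)).hasFDerivAt
  have hφconv : ConvexOn ℝ univ φ := hconv.sub ((innerₗ E (f' x)).concaveOn convex_univ)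
  have hφlip : ∀ u v, ‖(f' u - f' x) - (f' v - f' x)‖ ≤ L * ‖u - v‖ := by
    simpa only [sub_sub_sub_cancel_right] using hlip
  set y' := y - L⁻¹ • (f' y - f' x)
  have hmin : φ x ≤ φ y' := by
    simpa only [sub_self, inner_zero_left, add_zero] using hφconv.add_inner_le_of_hasGradientAt (hφ x) y'
  have hstep : φ y' ≤ φ y - (2 * L)⁻¹ * ‖f' y - f' x‖ ^ 2 :=
    apply_sub_inv_smul_le_of_lipschitz_gradient hL hφ hφlip y
  simp only [φ, inner_sub_right] at hmin hstep ⊢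
  linarith

end LipschitzGradient

theorem refined_gradient_descent_general
    {E : Type*} [NormedAddCommGroup E] [InnerProductSpace ℝ E] [FiniteDimensional ℝ E]
    (f : E → ℝ) (f' : E → E) (L : ℝ)
    (hdiff : ∀ x, HasGradientAt f (f' x) x)
    (hconv : ConvexOn ℝ Set.univ f)
    (hlip : ∀ x y, ‖f' x - f' y‖ ≤ L * ‖x - y‖)
    (t : ℝ) (ht : 0 < t) (htL : t ≤ 1 / L) (x : E) :
    f x ≥ f (x - t • f' x) + (t / 2) * ‖f' x‖ ^ 2 + (t / 2) * ‖f' (x - t • f' x)‖ ^ 2 := by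
  have hL : 0 < L := one_div_pos.mp (ht.trans_le htL)
  set x' := x - t • f' x
  have hcoco := hconv.add_inner_add_sq_le_of_lipschitz_gradient hL hdiff hlip x' x
  rw [sub_sub_cancel, real_inner_smul_right] at hcoco
  have hstep : t / 2 ≤ (2 * L)⁻¹ := by
    rw [one_div] at htL
    rw [mul_inv]
    linarith
  calc f x' + t / 2 * ‖f' x‖ ^ 2 + t / 2 * ‖f' x'‖ ^ 2
      = f x' + t * ⟪f' x', f' x⟫ + t / 2 * ‖f' x - f' x'‖ ^ 2 := by
        rw [norm_sub_sq_real, real_inner_comm]; ring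
    _ ≤ f x' + t * ⟪f' x', f' x⟫ + (2 * L)⁻¹ * ‖f' x - f' x'‖ ^ 2 := by gcongr
    _ ≤ f x := hcoco

/-- **Refined gradient descent inequality.** For `f` convex with `L`-Lipschitz gradient,
`0 < t ≤ 1/L` and `x⁺ = x - t∇f x`: `f(x) ≥ f(x⁺) + (t/2)‖∇f x‖² + (t/2)‖∇f x⁺‖²`. -/
theorem refined_gradient_descent
    {E : Type*} [NormedAddCommGroup E] [InnerProductSpace ℝ E] [FiniteDimensional ℝ E]
    (f : E → ℝ) (f' : E → E) (L : ℝ) (hL : 0 < L)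
    (hdiff : ∀ x, HasGradientAt f (f' x) x)
    (hconv : ConvexOn ℝ Set.univ f)
    (hlip : ∀ x y, ‖f' x - f' y‖ ≤ L * ‖x - y‖)
    (t : ℝ) (ht : 0 < t) (htL : t ≤ 1 / L) (x : E) :
    f x ≥ f (x - t • f' x) + (t / 2) * ‖f' x‖ ^ 2 + (t / 2) * ‖f' (x - t • f' x)‖ ^ 2 :=
  refined_gradient_descent_general f f' L hdiff hconv hlip t ht htL x
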